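/- Let (X, M, μ) be a measure space. If the containment C₀ ⊆ L^p(μ) holds for some 1 ≤ p < ∞, then sup{μ(E) : E ∈ M, μ(E) < ∞} < ∞. -/

import Mathlib

/-!
If there are sets of finite but arbitrarily large measure, pick `E n` with `2^{-n p} μ(E n) ≥ n`
and let `f = sup_n 2^{-n} 1_{E n}`. Then `f` is bounded by `1`, and off the finite-measure set
`E 0 ∪ ⋯ ∪ E N` it is at most `2^{-(N+1)}`, so `f ∈ C₀`. But `f ≥ 2^{-n}` on `E n`, so
Chebyshev's inequality gives `‖f‖_p^p ≥ n` for every `n`, and `f ∉ L^p`.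
-/

open MeasureTheory ENNReal Filter Topology

namespace MeasureTheory

section supIndicator

variable {X : Type*} {E : ℕ → Set X} {c : ℕ → ℝ≥0∞}

noncomputable def supIndicator (E : ℕ → Set X) (c : ℕ → ℝ≥0∞) (x : X) : ℝ≥0∞ :=
  ⨆ n, (E n).indicator (fun _ ↦ c n) x

theorem le_supIndicator {n : ℕ} {x : X} (hx : x ∈ E n) : c n ≤ supIndicator E c x :=
  le_iSup_of_le n (by simp [hx])

theorem supIndicator_le (hc : Antitone c) (x : X) : supIndicator E c x ≤ c 0 :=
  iSup_le fun n ↦ (Set.indicator_le_self' (fun _ _ ↦ zero_le) x).trans (hc n.zero_le)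

theorem supIndicator_le_of_forall_notMem (hc : Antitone c) {N : ℕ} {x : X}
    (hx : ∀ k ≤ N, x ∉ E k) : supIndicator E c x ≤ c (N + 1) := by
  refine iSup_le fun n ↦ ?_
  by_cases hn : n ≤ N
  · simp [hx n hn]
  · exact (Set.indicator_le_self' (fun _ _ ↦ zero_le) x).trans (hc (by omega))

theorem measurable_supIndicator [MeasurableSpace X] (hE : ∀ n, MeasurableSet (E n)) :
    Measurable (supIndicator E c) :=
  Measurable.iSup fun n ↦ measurable_const.indicator (hE n)

end supIndicator

variable {X F : Type*} [MeasurableSpace X] [NormedAddCommGroup F] {μ : Measure X}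

/-- The condition cutting `C₀` out of `L^∞(μ)`. -/
def VanishesAtInfinity (μ : Measure X) (f : X → F) : Prop :=
  ∀ ε : ℝ, 0 < ε → ∃ E : Set X, MeasurableSet E ∧ μ E < ∞ ∧
    eLpNorm ((Eᶜ).indicator f) ∞ μ < ENNReal.ofReal ε

theorem vanishesAtInfinity_of_forall_norm_le {f : X → F}
    (h : ∀ ε : ℝ, 0 < ε → ∃ E : Set X, MeasurableSet E ∧ μ E < ∞ ∧ ∀ x ∉ E, ‖f x‖ ≤ ε) :
    VanishesAtInfinity μ f := by
  intro ε hε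
  obtain ⟨E, hE, hEμ, hfE⟩ := h (ε / 2) (half_pos hε)
  refine ⟨E, hE, hEμ, ?_⟩
  have hbound : ∀ x, ‖(Eᶜ).indicator f x‖ ≤ ε / 2 := by
    intro x
    by_cases hx : x ∈ E
    · simpa [hx] using (half_pos hε).le
    · simpa [hx] using hfE x hx
  calc eLpNorm ((Eᶜ).indicator f) ∞ μ = eLpNormEssSup ((Eᶜ).indicator f) μ := eLpNorm_exponent_top
    _ ≤ ENNReal.ofReal (ε / 2) := eLpNormEssSup_le_of_ae_bound (Eventually.of_forall hbound)
    _ < ENNReal.ofReal ε := (ENNReal.ofReal_lt_ofReal_iff hε).2 (half_lt_self hε)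

theorem exists_le_mul_measure_of_sSup_eq_top
    (hμ : sSup (μ '' {E : Set X | MeasurableSet E ∧ μ E < ∞}) = ∞) {a : ℝ≥0∞} (ha0 : a ≠ 0)
    (ha : a ≠ ∞) {r : ℝ≥0∞} (hr : r ≠ ∞) :
    ∃ E : Set X, (MeasurableSet E ∧ μ E < ∞) ∧ r ≤ a * μ E := by
  obtain ⟨_, ⟨E, hE, rfl⟩, hlt⟩ := lt_sSup_iff.1 (hμ ▸ div_lt_top hr ha0 : r / a < _)
  exact ⟨E, hE, (ENNReal.div_le_iff' ha0 ha).1 hlt.le⟩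

theorem mul_measure_le_eLpNorm_pow {f : X → F} {p : ℝ≥0∞} (hp0 : p ≠ 0) (hp : p ≠ ∞)
    (hf : AEStronglyMeasurable f μ) {E : Set X} {a : ℝ≥0∞} (hfE : ∀ x ∈ E, a ≤ ‖f x‖ₑ) :
    a ^ p.toReal * μ E ≤ eLpNorm f p μ ^ p.toReal :=
  (mul_le_mul_right (measure_mono hfE) _).trans (mul_meas_ge_le_pow_eLpNorm' μ hp0 hp hf a)

section supIndicator

variable {E : ℕ → Set X} {c : ℕ → ℝ≥0∞}

theorem memLp_top_toReal_supIndicator (hE : ∀ n, MeasurableSet (E n)) (hc : Antitone c)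
    (hc0 : c 0 ≠ ∞) : MemLp (fun x ↦ (supIndicator E c x).toReal) ∞ μ := by
  refine memLp_top_of_bound (measurable_supIndicator hE).ennreal_toReal.aestronglyMeasurable
    (c 0).toReal (Eventually.of_forall fun x ↦ ?_)
  rw [Real.norm_of_nonneg toReal_nonneg]
  exact toReal_mono hc0 (supIndicator_le hc x)

theorem vanishesAtInfinity_toReal_supIndicator (hE : ∀ n, MeasurableSet (E n))
    (hEμ : ∀ n, μ (E n) < ∞) (hc : Antitone c) (hc_lim : Tendsto c atTop (𝓝 0)) :
    VanishesAtInfinity μ fun x ↦ (supIndicator E c x).toReal := by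
  refine vanishesAtInfinity_of_forall_norm_le fun ε hε ↦ ?_
  obtain ⟨N, hN⟩ := (hc_lim.eventually (ge_mem_nhds (ofReal_pos.2 hε))).exists_forall_of_atTop
  refine ⟨⋃ k ∈ Set.Iic N, E k, (Set.finite_Iic N).measurableSet_biUnion fun k _ ↦ hE k,
    measure_biUnion_lt_top (Set.finite_Iic N) fun k _ ↦ hEμ k, fun x hx ↦ ?_⟩
  have hxE : ∀ k ≤ N, x ∉ E k := fun k hk hxk ↦ hx (Set.mem_biUnion hk hxk)
  rw [Real.norm_of_nonneg toReal_nonneg]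
  exact toReal_le_of_le_ofReal hε.le
    ((supIndicator_le_of_forall_notMem hc hxE).trans (hN (N + 1) N.le_succ))

end supIndicator

end MeasureTheory

open MeasureTheory

theorem stmt_13 {X : Type*} [MeasurableSpace X] (μ : Measure X)
    (p : ℝ) (hp : 1 ≤ p)
    (hincl : ∀ f : X → ℝ, MemLp f ∞ μ →
      (∀ ε : ℝ, 0 < ε → ∃ E : Set X, MeasurableSet E ∧ μ E < ∞ ∧
        eLpNorm ((Eᶜ).indicator f) ∞ μ < ENNReal.ofReal ε) →
      MemLp f (ENNReal.ofReal p) μ) :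
    sSup (μ '' {E : Set X | MeasurableSet E ∧ μ E < ∞}) < ∞ := by
  by_contra hS
  set q := (ENNReal.ofReal p).toReal
  have hp0 : ENNReal.ofReal p ≠ 0 := (ofReal_pos.2 (by linarith)).ne'
  set c : ℕ → ℝ≥0∞ := fun n ↦ 2⁻¹ ^ n
  have hc : Antitone c := pow_right_anti₀ zero_le (by norm_num)
  have hcq0 : ∀ n, c n ^ q ≠ 0 := fun n ↦ by simp [c, q]
  have hcq_top : ∀ n, c n ^ q ≠ ∞ := fun n ↦ rpow_ne_top_of_nonneg toReal_nonneg (by simp [c])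
  choose E hE hEn using fun n : ℕ ↦ exists_le_mul_measure_of_sSup_eq_top
    (not_lt_top_iff.1 hS) (hcq0 n) (hcq_top n) (natCast_ne_top n)
  have hf := hincl _ (memLp_top_toReal_supIndicator (fun n ↦ (hE n).1) hc (by simp [c]))
    (vanishesAtInfinity_toReal_supIndicator (fun n ↦ (hE n).1) (fun n ↦ (hE n).2) hc
      (ENNReal.tendsto_pow_atTop_nhds_zero_of_lt_one (by norm_num)))
  obtain ⟨n, hn⟩ := ENNReal.exists_nat_gt (rpow_ne_top_of_nonneg toReal_nonneg hf.eLpNorm_ne_top)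
  refine hn.not_ge ((hEn n).trans (mul_measure_le_eLpNorm_pow hp0 ofReal_ne_top hf.1 ?_))
  intro x hx
  rw [Real.enorm_toReal ((supIndicator_le hc x).trans_lt (by simp [c])).ne]
  exact le_supIndicator hx
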